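/- Let S ⊆ Y be a closed set, Υ: X → Y twice continuously differentiable, and x̄ ∈ Υ⁻¹(S). Assume: (i) for every d, d ∈ T_{Υ⁻¹(S)}(x̄) iff Υ'(x̄)d ∈ T_S(Υ(x̄)); (ii) for d ∈ T_{Υ⁻¹(S)}(x̄), w ∈ T²_{Υ⁻¹(S)}(x̄, d) iff Υ'(x̄)w + ∇²Υ(x̄)(d,d) ∈ T²_S(Υ(x̄), Υ'(x̄)d); (iii) there is κ > 0 such that the solution set map S_d(p) := {u | Υ'(x̄)u + ∇²Υ(x̄)(d,d) + p ∈ T²_S(Υ(x̄), Υ'(x̄)d)} satisfies S_d(p) ⊆ S_d(0) + κ‖p‖𝔹. If S is outer second-order regular at Υ(x̄) in the direction Υ'(x̄)d ∈ T_S(Υ(x̄)), then Υ⁻¹(S) is outer second-order regular at x̄ in the direction d. -/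

import Mathlib

open Filter Topology

/-- The (Bouligand) tangent cone to `S` at `x`, via sequences. -/
def tangentConeB {E : Type*} [NormedAddCommGroup E] [NormedSpace ℝ E]
    (S : Set E) (x : E) : Set E :=
  {d | ∃ (t : ℕ → ℝ) (dk : ℕ → E), (∀ k, 0 < t k) ∧ Tendsto t atTop (𝓝 0) ∧
    Tendsto dk atTop (𝓝 d) ∧ ∀ k, x + t k • dk k ∈ S}

/-- The outer second-order tangent set to `S` at `x` in direction `h`. -/
def outerSecondOrderTangentSet {E : Type*} [NormedAddCommGroup E] [NormedSpace ℝ E]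
    (S : Set E) (x h : E) : Set E :=
  {w | ∃ t : ℕ → ℝ, (∀ k, 0 < t k) ∧ Tendsto t atTop (𝓝 0) ∧
    Tendsto (fun k => Metric.infDist (x + t k • h + ((t k) ^ 2 / 2) • w) S / (t k) ^ 2)
      atTop (𝓝 0)}

/-- `S` is outer second-order regular at `y ∈ S` in direction `h`: for every sequence
`y + t_k h + ½ t_k² w_k ∈ S` with `t_k ↓ 0` and `t_k w_k → 0`, one has
`dist(w_k, T²_S(y; h)) → 0`. -/
def OuterSecondOrderRegular {E : Type*} [NormedAddCommGroup E] [NormedSpace ℝ E]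
    (S : Set E) (y h : E) : Prop :=
  ∀ (t : ℕ → ℝ) (w : ℕ → E), (∀ k, 0 < t k) → Tendsto t atTop (𝓝 0) →
    Tendsto (fun k => t k • w k) atTop (𝓝 0) →
    (∀ k, y + t k • h + ((t k) ^ 2 / 2) • w k ∈ S) →
    Tendsto (fun k => Metric.infDist (w k) (outerSecondOrderTangentSet S y h)) atTop (𝓝 0)

/-! Pushing the curve `x + t_k d + ½ t_k² w_k ∈ Υ⁻¹(S)` forward by `Υ` and expanding to
second order gives a curve `Υ x + t_k Υ'd + ½ t_k² W_k ∈ S` with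
`W_k - (Υ'w_k + Υ''(d,d)) → 0`. Regularity of `S` makes `dist(W_k, T²_S) → 0`, so
`Υ'w_k + Υ''(d,d)` is close to `T²_S`; the stability (iii) turns this into `w_k` being close
to the solution set of the linearized system, which is `T²_{Υ⁻¹(S)}(x; d)` by (ii). -/

open Asymptotics

section SecondOrderExpansion

variable {X Y : Type*} [NormedAddCommGroup X] [NormedSpace ℝ X]
  [NormedAddCommGroup Y] [NormedSpace ℝ Y]

theorem isLittleO_sub_of_hasFDerivAt_isLittleO {g : X → Y} {g' : X → X →L[ℝ] Y}
    (hg : ∀ v, HasFDerivAt g (g' v) v) (hg' : g' =o[𝓝 0] fun v => ‖v‖) :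
    (fun v => g v - g 0) =o[𝓝 0] fun v => ‖v‖ ^ 2 := by
  refine IsLittleO.of_bound fun c hc => ?_
  obtain ⟨δ, hδ, hbound⟩ := Metric.eventually_nhds_iff_ball.1 (hg'.bound hc)
  filter_upwards [Metric.ball_mem_nhds 0 hδ] with v hv
  have hseg : segment ℝ 0 v ⊆ Metric.ball 0 δ :=
    (convex_ball 0 δ).segment_subset (Metric.mem_ball_self hδ) hv
  have hderiv_le : ∀ u ∈ segment ℝ 0 v, ‖g' u‖ ≤ c * ‖v‖ := fun u hu =>
    (hbound u (hseg hu)).trans <| by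
      simpa only [norm_norm, sub_zero] using
        mul_le_mul_of_nonneg_left (norm_sub_le_of_mem_segment hu) hc.le
  calc ‖g v - g 0‖ ≤ c * ‖v‖ * ‖v - 0‖ :=
        (convex_segment 0 v).norm_image_sub_le_of_norm_hasFDerivWithin_le
          (fun u _ => (hg u).hasFDerivWithinAt) hderiv_le
          (left_mem_segment ℝ 0 v) (right_mem_segment ℝ 0 v)
    _ = c * ‖‖v‖ ^ 2‖ := by rw [sub_zero, norm_pow, norm_norm]; ring

theorem ContDiff.isLittleO_taylor_two {f : X → Y} (hf : ContDiff ℝ 2 f) (x : X) :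
    (fun h => f (x + h) - f x - fderiv ℝ f x h -
      (1 / 2 : ℝ) • fderiv ℝ (fderiv ℝ f) x h h)
      =o[𝓝 0] fun h => ‖h‖ ^ 2 := by
  set A := fderiv ℝ f x
  set B := fderiv ℝ (fderiv ℝ f) x
  have hf' : HasFDerivAt (fderiv ℝ f) B x :=
    ((hf.fderiv_right (m := 1) le_rfl).differentiable one_ne_zero x).hasFDerivAt
  have hB_symm : ∀ u v, B u v = B v u :=
    (hf.contDiffAt.isSymmSndFDerivAt (by simp)).eq
  have hg : ∀ v, HasFDerivAt (fun v => f (x + v) - A v - (1 / 2 : ℝ) • B v v)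
      (fderiv ℝ f (x + v) - A - B v) v := by
    intro v
    have hquad : HasFDerivAt (fun v => (1 / 2 : ℝ) • B v v) (B v) v := by
      refine ((B.hasFDerivAt.clm_apply (hasFDerivAt_id v)).const_smul
        (1 / 2 : ℝ)).congr_fderiv ?_
      ext u
      simp [hB_symm u v]
      module
    have hshift : HasFDerivAt (fun v => f (x + v)) (fderiv ℝ f (x + v)) v :=
      (hasFDerivAt_comp_add_left x).2 ((hf.differentiable two_ne_zero) (x + v)).hasFDerivAt
    exact (hshift.sub A.hasFDerivAt).sub hquad
  convert isLittleO_sub_of_hasFDerivAt_isLittleO hg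
    ((hasFDerivAt_iff_isLittleO_nhds_zero.1 hf').norm_right) using 2 with h
  simp only [add_zero, map_zero, smul_zero, sub_zero]
  abel

theorem ContDiff.tendsto_second_difference_quotient {f : X → Y} (hf : ContDiff ℝ 2 f)
    (x : X) {α : Type*} {l : Filter α} {t : α → ℝ} {v : α → X} {d : X}
    (ht : Tendsto t l (𝓝 0)) (ht_ne : ∀ᶠ k in l, t k ≠ 0) (hv : Tendsto v l (𝓝 d)) :
    Tendsto (fun k => (2 / t k ^ 2) • (f (x + t k • v k) - f x - t k • fderiv ℝ f x (v k)))
      l (𝓝 (fderiv ℝ (fderiv ℝ f) x d d)) := by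
  set B := fderiv ℝ (fderiv ℝ f) x
  set R := fun h => f (x + h) - f x - fderiv ℝ f x h - (1 / 2 : ℝ) • B h h
  have htv : Tendsto (fun k => t k • v k) l (𝓝 0) := by simpa using ht.smul hv
  have hv_sq : (fun k => ‖t k • v k‖ ^ 2) =O[l] fun k => t k ^ 2 := by
    have hbdd : (fun k => ‖v k‖ ^ 2) =O[l] fun _ => (1 : ℝ) :=
      (hv.norm.pow 2).isBigO_one ℝ
    simpa [norm_smul, mul_pow] using (isBigO_refl (fun k => t k ^ 2) l).mul hbdd
  have hR : (fun k => R (t k • v k)) =o[l] fun k => t k ^ 2 :=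
    ((hf.isLittleO_taylor_two x).comp_tendsto htv).trans_isBigO hv_sq
  have hB : Tendsto (fun k => B (v k) (v k)) l (𝓝 (B d d)) :=
    (B.isBoundedBilinearMap.continuous.tendsto (d, d)).comp (hv.prodMk_nhds hv)
  have hlim := (hR.tendsto_inv_smul_nhds_zero.const_smul (2 : ℝ)).add hB
  rw [smul_zero, zero_add] at hlim
  refine hlim.congr' ?_
  filter_upwards [ht_ne] with k hk
  simp only [R, map_smul, smul_apply]
  match_scalars <;> field_simp
  norm_num

theorem ContDiff.tendsto_second_order_image_sub {f : X → Y} (hf : ContDiff ℝ 2 f)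
    (x d : X) {α : Type*} {l : Filter α} {t : α → ℝ} {w : α → X}
    (ht : Tendsto t l (𝓝 0)) (ht_ne : ∀ᶠ k in l, t k ≠ 0)
    (htw : Tendsto (fun k => t k • w k) l (𝓝 0)) :
    Tendsto (fun k => (2 / t k ^ 2) •
        (f (x + t k • d + (t k ^ 2 / 2) • w k) - f x - t k • fderiv ℝ f x d) -
          fderiv ℝ f x (w k)) l (𝓝 (fderiv ℝ (fderiv ℝ f) x d d)) := by
  have hv : Tendsto (fun k => d + (1 / 2 : ℝ) • t k • w k) l (𝓝 d) := by
    simpa using (htw.const_smul (1 / 2 : ℝ)).const_add d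
  refine (hf.tendsto_second_difference_quotient x ht ht_ne hv).congr' ?_
  filter_upwards [ht_ne] with k hk
  have harg :
      x + t k • (d + (1 / 2 : ℝ) • t k • w k) = x + t k • d + (t k ^ 2 / 2) • w k := by
    module
  rw [harg, map_add, map_smul, map_smul]
  match_scalars <;> field_simp

theorem ContDiff.exists_second_order_image {f : X → Y} (hf : ContDiff ℝ 2 f)
    (x d : X) {α : Type*} {l : Filter α} {t : α → ℝ} {w : α → X}
    (ht : Tendsto t l (𝓝 0)) (ht_ne : ∀ k, t k ≠ 0)
    (htw : Tendsto (fun k => t k • w k) l (𝓝 0)) :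
    ∃ W : α → Y,
      (∀ k, f x + t k • fderiv ℝ f x d + (t k ^ 2 / 2) • W k =
        f (x + t k • d + (t k ^ 2 / 2) • w k)) ∧
      Tendsto (fun k => t k • W k) l (𝓝 0) ∧
      Tendsto (fun k => W k - fderiv ℝ f x (w k)) l (𝓝 (fderiv ℝ (fderiv ℝ f) x d d)) := by
  have hW := hf.tendsto_second_order_image_sub x d ht (.of_forall ht_ne) htw
  refine ⟨_, fun k => ?_, ?_, hW⟩
  · have hcancel : t k ^ 2 / 2 * (2 / t k ^ 2) = 1 := by field_simp [ht_ne k]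
    rw [smul_smul, hcancel, one_smul]
    abel
  · have hlim := (ht.smul hW).add (((fderiv ℝ f x).continuous.tendsto 0).comp htw)
    rw [zero_smul, map_zero, add_zero] at hlim
    refine hlim.congr fun k => ?_
    rw [Function.comp_apply, map_smul, ← smul_add, sub_add_cancel]

end SecondOrderExpansion

theorem infDist_preimage_le_mul_infDist {X Y : Type*} [PseudoMetricSpace X]
    [PseudoMetricSpace Y] {f : X → Y} {T : Set Y} {κ : ℝ} (hκ : 0 < κ)
    (hstab : ∀ u, ∀ z ∈ T, ∃ u' ∈ f ⁻¹' T, dist u u' ≤ κ * dist (f u) z) (u : X) :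
    Metric.infDist u (f ⁻¹' T) ≤ κ * Metric.infDist (f u) T := by
  rcases T.eq_empty_or_nonempty with rfl | hT
  · simp
  rw [← div_le_iff₀' hκ, Metric.le_infDist hT]
  intro z hz
  obtain ⟨u', hu', hdist⟩ := hstab u z hz
  rw [div_le_iff₀' hκ]
  exact (Metric.infDist_le_dist_of_mem hu').trans hdist

theorem outerSecondOrderRegular_preimage_general
    {X Y : Type*} [NormedAddCommGroup X] [InnerProductSpace ℝ X]
    [NormedAddCommGroup Y] [InnerProductSpace ℝ Y]
    (S : Set Y) (Υ : X → Y) (hΥ : ContDiff ℝ 2 Υ)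
    (x : X) (d : X)
    -- (i): tangent cone characterization
    (hi : ∀ v : X, v ∈ tangentConeB (Υ ⁻¹' S) x ↔
      fderiv ℝ Υ x v ∈ tangentConeB S (Υ x))
    -- (ii): second-order tangent set characterization
    (hii : ∀ v ∈ tangentConeB (Υ ⁻¹' S) x, ∀ w : X,
      w ∈ outerSecondOrderTangentSet (Υ ⁻¹' S) x v ↔
      fderiv ℝ Υ x w + fderiv ℝ (fderiv ℝ Υ) x v v ∈
        outerSecondOrderTangentSet S (Υ x) (fderiv ℝ Υ x v))
    -- (iii): Lipschitz-type stability of the linearized second-order system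
    (hiii : ∃ κ > (0 : ℝ), ∀ p : Y,
      ∀ u ∈ {u : X | fderiv ℝ Υ x u + fderiv ℝ (fderiv ℝ Υ) x d d + p ∈
        outerSecondOrderTangentSet S (Υ x) (fderiv ℝ Υ x d)},
      ∃ u' ∈ {u : X | fderiv ℝ Υ x u + fderiv ℝ (fderiv ℝ Υ) x d d ∈
        outerSecondOrderTangentSet S (Υ x) (fderiv ℝ Υ x d)},
      ‖u - u'‖ ≤ κ * ‖p‖)
    (hd : fderiv ℝ Υ x d ∈ tangentConeB S (Υ x))
    (hreg : OuterSecondOrderRegular S (Υ x) (fderiv ℝ Υ x d)) :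
    OuterSecondOrderRegular (Υ ⁻¹' S) x d := by
  obtain ⟨κ, hκ, hstab⟩ := hiii
  intro t w ht ht_lim htw hmem
  set A := fderiv ℝ Υ x
  set B := fderiv ℝ (fderiv ℝ Υ) x
  set T := outerSecondOrderTangentSet S (Υ x) (A d)
  have hT_pre : outerSecondOrderTangentSet (Υ ⁻¹' S) x d = (fun u => A u + B d d) ⁻¹' T :=
    Set.ext (hii d ((hi d).2 hd))
  obtain ⟨W, hW_eq, htW, hW⟩ :=
    hΥ.exists_second_order_image x d ht_lim (fun k => (ht k).ne') htw
  have hdist := hreg t W ht ht_lim htW fun k => (hW_eq k).symm ▸ hmem k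
  have hW' : Tendsto (fun k => dist (A (w k) + B d d) (W k)) atTop (𝓝 0) := by
    simpa only [dist_comm, dist_eq_norm, sub_sub] using tendsto_iff_norm_sub_tendsto_zero.1 hW
  refine squeeze_zero (fun _ => Metric.infDist_nonneg) (fun k => ?_)
    (by simpa using (hdist.add hW').const_mul κ)
  rw [hT_pre]
  refine (infDist_preimage_le_mul_infDist hκ (fun u z hz => ?_) (w k)).trans ?_
  · obtain ⟨u', hu', hle⟩ := hstab (z - (A u + B d d)) u (by simpa using hz)
    exact ⟨u', hu', by rwa [dist_eq_norm, dist_comm, dist_eq_norm]⟩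
  · exact mul_le_mul_of_nonneg_left Metric.infDist_le_infDist_add_dist hκ.le

/-- Under the first- and second-order tangent characterizations of the preimage and the
Lipschitz-type stability of the second-order linearized system, outer second-order
regularity of `S` at `Υ(x̄)` in direction `Υ'(x̄)d` implies outer second-order regularity
of `Υ⁻¹(S)` at `x̄` in direction `d`. -/
theorem outerSecondOrderRegular_preimage
    {X Y : Type*} [NormedAddCommGroup X] [InnerProductSpace ℝ X] [FiniteDimensional ℝ X]
    [NormedAddCommGroup Y] [InnerProductSpace ℝ Y] [FiniteDimensional ℝ Y]
    (S : Set Y) (hS : IsClosed S) (Υ : X → Y) (hΥ : ContDiff ℝ 2 Υ)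
    (x : X) (hx : Υ x ∈ S) (d : X)
    -- (i): tangent cone characterization
    (hi : ∀ v : X, v ∈ tangentConeB (Υ ⁻¹' S) x ↔
      fderiv ℝ Υ x v ∈ tangentConeB S (Υ x))
    -- (ii): second-order tangent set characterization
    (hii : ∀ v ∈ tangentConeB (Υ ⁻¹' S) x, ∀ w : X,
      w ∈ outerSecondOrderTangentSet (Υ ⁻¹' S) x v ↔
      fderiv ℝ Υ x w + fderiv ℝ (fderiv ℝ Υ) x v v ∈
        outerSecondOrderTangentSet S (Υ x) (fderiv ℝ Υ x v))
    -- (iii): Lipschitz-type stability of the linearized second-order system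
    (hiii : ∃ κ > (0 : ℝ), ∀ p : Y,
      ∀ u ∈ {u : X | fderiv ℝ Υ x u + fderiv ℝ (fderiv ℝ Υ) x d d + p ∈
        outerSecondOrderTangentSet S (Υ x) (fderiv ℝ Υ x d)},
      ∃ u' ∈ {u : X | fderiv ℝ Υ x u + fderiv ℝ (fderiv ℝ Υ) x d d ∈
        outerSecondOrderTangentSet S (Υ x) (fderiv ℝ Υ x d)},
      ‖u - u'‖ ≤ κ * ‖p‖)
    (hd : fderiv ℝ Υ x d ∈ tangentConeB S (Υ x))
    (hreg : OuterSecondOrderRegular S (Υ x) (fderiv ℝ Υ x d)) :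
    OuterSecondOrderRegular (Υ ⁻¹' S) x d :=
  outerSecondOrderRegular_preimage_general S Υ hΥ x d hi hii hiii hd hreg
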